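/- For dim H ≥ 2, the instruments I^p = {p₁·id, p₂·id} and I^q = {q₁·id, q₂·id} (with p_i, q_j marginals of a probability distribution r_{ij}) are not parallelly compatible, since parallel compatibility would imply compatibility of the identity channel with itself, contradicting no-cloning. -/

import Mathlib

open Matrix BigOperators ComplexOrder

noncomputable section

/-- Partial trace over the second tensor factor. -/
def ptraceRight {A B : Type*} [Fintype B] (M : Matrix (A × B) (A × B) ℂ) :
    Matrix A A ℂ := fun i j => ∑ k, M (i, k) (j, k)

/-- Partial trace over the first tensor factor. -/
def ptraceLeft {A B : Type*} [Fintype A] (M : Matrix (A × B) (A × B) ℂ) :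
    Matrix B B ℂ := fun i j => ∑ k, M (k, i) (k, j)

/-- Complete positivity, via existence of a Kraus decomposition (Choi's theorem). -/
def IsCP {H K : Type*} [Fintype H] [Fintype K]
    (Φ : Matrix H H ℂ →ₗ[ℂ] Matrix K K ℂ) : Prop :=
  ∃ (m : ℕ) (Ks : Fin m → Matrix K H ℂ), ∀ ρ, Φ ρ = ∑ i, Ks i * ρ * (Ks i)ᴴ

def IsTP {H K : Type*} [Fintype H] [Fintype K]
    (Φ : Matrix H H ℂ →ₗ[ℂ] Matrix K K ℂ) : Prop :=
  ∀ ρ, (Φ ρ).trace = ρ.trace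

/-- A quantum channel is a CPTP map. -/
def IsChannel {H K : Type*} [Fintype H] [Fintype K]
    (Φ : Matrix H H ℂ →ₗ[ℂ] Matrix K K ℂ) : Prop := IsCP Φ ∧ IsTP Φ

/-- A quantum instrument: a finite family of CP maps summing to a CPTP map. -/
def IsInstrument {ι H K : Type*} [Fintype ι] [Fintype H] [Fintype K]
    (Φ : ι → (Matrix H H ℂ →ₗ[ℂ] Matrix K K ℂ)) : Prop :=
  (∀ x, IsCP (Φ x)) ∧ IsTP (∑ x, Φ x)

def IsDensity {H : Type*} [Fintype H] (ρ : Matrix H H ℂ) : Prop :=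
  ρ.PosSemidef ∧ ρ.trace = 1

def IsPOVM {ι H : Type*} [Fintype ι] [Fintype H] [DecidableEq H]
    (A : ι → Matrix H H ℂ) : Prop :=
  (∀ x, (A x).PosSemidef) ∧ (∑ x, A x) = 1

/-- `Φd` is the Heisenberg dual of `Φ`. -/
def IsDual {H K : Type*} [Fintype H] [Fintype K]
    (Φ : Matrix H H ℂ →ₗ[ℂ] Matrix K K ℂ)
    (Φd : Matrix K K ℂ →ₗ[ℂ] Matrix H H ℂ) : Prop :=
  ∀ ρ X, ((Φ ρ) * X).trace = (ρ * Φd X).trace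

/-- The instrument `I` measures the observable `A`. -/
def ACompatible {ι H K : Type*} [Fintype ι] [Fintype H] [Fintype K]
    (A : ι → Matrix H H ℂ) (I : ι → (Matrix H H ℂ →ₗ[ℂ] Matrix K K ℂ)) : Prop :=
  ∀ ρ, IsDensity ρ → ∀ x, (I x ρ).trace = (ρ * A x).trace

/-- Observable-observable compatibility: existence of a joint POVM. -/
def ObsCompatible {ιx ιy H : Type*} [Fintype ιx] [Fintype ιy] [Fintype H] [DecidableEq H]
    (A : ιx → Matrix H H ℂ) (B : ιy → Matrix H H ℂ) : Prop :=
  ∃ G : ιx × ιy → Matrix H H ℂ, IsPOVM G ∧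
    (∀ x, ∑ y, G (x, y) = A x) ∧ (∀ y, ∑ x, G (x, y) = B y)

/-- Channel-channel compatibility: existence of a joint channel. -/
def ChannelsCompatible {H K₁ K₂ : Type*} [Fintype H] [Fintype K₁] [Fintype K₂]
    (Λ₁ : Matrix H H ℂ →ₗ[ℂ] Matrix K₁ K₁ ℂ)
    (Λ₂ : Matrix H H ℂ →ₗ[ℂ] Matrix K₂ K₂ ℂ) : Prop :=
  ∃ Λ : Matrix H H ℂ →ₗ[ℂ] Matrix (K₁ × K₂) (K₁ × K₂) ℂ, IsChannel Λ ∧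
    (∀ ρ, ptraceRight (Λ ρ) = Λ₁ ρ) ∧ (∀ ρ, ptraceLeft (Λ ρ) = Λ₂ ρ)

/-- Observable-channel compatibility. -/
def ObsChannelCompatible {ι H K : Type*} [Fintype ι] [Fintype H] [Fintype K]
    (A : ι → Matrix H H ℂ) (Λ : Matrix H H ℂ →ₗ[ℂ] Matrix K K ℂ) : Prop :=
  ∃ I : ι → (Matrix H H ℂ →ₗ[ℂ] Matrix K K ℂ),
    IsInstrument I ∧ ACompatible A I ∧ (∑ x, I x) = Λ

/-- Traditional compatibility of two instruments with the same output space. -/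
def TraditionallyCompatible {ιx ιy H K : Type*} [Fintype ιx] [Fintype ιy] [Fintype H] [Fintype K]
    (I₁ : ιx → (Matrix H H ℂ →ₗ[ℂ] Matrix K K ℂ))
    (I₂ : ιy → (Matrix H H ℂ →ₗ[ℂ] Matrix K K ℂ)) : Prop :=
  ∃ Φ : ιx × ιy → (Matrix H H ℂ →ₗ[ℂ] Matrix K K ℂ), IsInstrument Φ ∧
    (∀ x, ∑ y, Φ (x, y) = I₁ x) ∧ (∀ y, ∑ x, Φ (x, y) = I₂ y)

/-- Parallel compatibility of two instruments. -/
def ParallelCompatible {ιx ιy H K₁ K₂ : Type*} [Fintype ιx] [Fintype ιy]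
    [Fintype H] [Fintype K₁] [Fintype K₂]
    (I₁ : ιx → (Matrix H H ℂ →ₗ[ℂ] Matrix K₁ K₁ ℂ))
    (I₂ : ιy → (Matrix H H ℂ →ₗ[ℂ] Matrix K₂ K₂ ℂ)) : Prop :=
  ∃ Φ : ιx × ιy → (Matrix H H ℂ →ₗ[ℂ] Matrix (K₁ × K₂) (K₁ × K₂) ℂ), IsInstrument Φ ∧
    (∀ x ρ, ∑ y, ptraceRight (Φ (x, y) ρ) = I₁ x ρ) ∧
    (∀ y ρ, ∑ x, ptraceLeft (Φ (x, y) ρ) = I₂ y ρ)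

/-- Tensor product of two maps on matrix algebras. -/
def tensorMap {A B C D : Type*} [Fintype A] [Fintype B] [Fintype C] [Fintype D]
    [DecidableEq A] [DecidableEq B]
    (Φ : Matrix A A ℂ →ₗ[ℂ] Matrix C C ℂ) (Ψ : Matrix B B ℂ →ₗ[ℂ] Matrix D D ℂ) :
    Matrix (A × B) (A × B) ℂ →ₗ[ℂ] Matrix (C × D) (C × D) ℂ where
  toFun M := fun p q => ∑ a, ∑ a', ∑ b, ∑ b',
    M (a, b) (a', b') * (Φ (Matrix.single a a' 1)) p.1 q.1
      * (Ψ (Matrix.single b b' 1)) p.2 q.2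
  map_add' M N := by
    funext p q
    simp [Matrix.add_apply, add_mul, Finset.sum_add_distrib]
    rfl
  map_smul' c M := by
    funext p q
    simp [Matrix.smul_apply, Finset.mul_sum, mul_assoc]
    show _ = c * _
    simp [Finset.mul_sum]

/-!
The total channels of the two instruments are both the identity, and parallel
compatibility makes them compatible channels, i.e. it yields a broadcasting channel `Λ` with
both marginals equal to `id`. Writing `Λ` in Kraus form `Λ ρ = ∑ Kᵢ ρ Kᵢᴴ`, the right marginal
forces `Kᵢ (a, k) c = 0` for `a ≠ c`; then every term of the `(a, b)` entry of the left marginal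
of `Λ (single a b 1)` vanishes for `a ≠ b`, although that entry must be `1`.
-/

open ComplexConjugate

section PartialTrace

variable {A B ι : Type*}

lemma ptraceRight_sum [Fintype B] (s : Finset ι) (f : ι → Matrix (A × B) (A × B) ℂ) :
    ptraceRight (∑ x ∈ s, f x) = ∑ x ∈ s, ptraceRight (f x) := by
  ext i j
  simp only [ptraceRight, Matrix.sum_apply]
  exact Finset.sum_comm

lemma ptraceLeft_sum [Fintype A] (s : Finset ι) (f : ι → Matrix (A × B) (A × B) ℂ) :
    ptraceLeft (∑ x ∈ s, f x) = ∑ x ∈ s, ptraceLeft (f x) := by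
  ext i j
  simp only [ptraceLeft, Matrix.sum_apply]
  exact Finset.sum_comm

end PartialTrace

section CompletelyPositive

variable {H K : Type*} [Fintype H]

lemma IsCP.add [Fintype K] {Φ Ψ : Matrix H H ℂ →ₗ[ℂ] Matrix K K ℂ} (hΦ : IsCP Φ)
    (hΨ : IsCP Ψ) : IsCP (Φ + Ψ) := by
  obtain ⟨m, Ks, hK⟩ := hΦ
  obtain ⟨n, Ls, hL⟩ := hΨ
  refine ⟨m + n, Fin.append Ks Ls, fun ρ => ?_⟩
  simp [Fin.sum_univ_add, hK, hL]

lemma isCP_sum [Fintype K] {ι : Type*} (s : Finset ι)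
    (Φ : ι → (Matrix H H ℂ →ₗ[ℂ] Matrix K K ℂ)) (h : ∀ x ∈ s, IsCP (Φ x)) : IsCP (∑ x ∈ s, Φ x) :=
  Finset.sum_induction Φ IsCP (fun _ _ => IsCP.add) ⟨0, Fin.elim0, fun ρ => by simp⟩ h

lemma kraus_single_apply [DecidableEq H] {m : ℕ} (Ks : Fin m → Matrix K H ℂ) (c d : H)
    (u v : K) :
    (∑ i, Ks i * single c d (1 : ℂ) * (Ks i)ᴴ) u v = ∑ i, Ks i u c * conj (Ks i v d) := by
  simp [Matrix.sum_apply, Matrix.mul_apply, Matrix.single_apply, ite_and]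

end CompletelyPositive

theorem ParallelCompatible.channelsCompatible_sum {ιx ιy H K₁ K₂ : Type*} [Fintype ιx]
    [Fintype ιy] [Fintype H] [Fintype K₁] [Fintype K₂]
    {I₁ : ιx → (Matrix H H ℂ →ₗ[ℂ] Matrix K₁ K₁ ℂ)}
    {I₂ : ιy → (Matrix H H ℂ →ₗ[ℂ] Matrix K₂ K₂ ℂ)} (h : ParallelCompatible I₁ I₂) :
    ChannelsCompatible (∑ x, I₁ x) (∑ y, I₂ y) := by
  obtain ⟨Φ, ⟨hCP, hTP⟩, h₁, h₂⟩ := h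
  refine ⟨∑ xy, Φ xy, ⟨isCP_sum _ _ fun xy _ => hCP xy, hTP⟩, fun ρ => ?_, fun ρ => ?_⟩
  · rw [LinearMap.sum_apply, ptraceRight_sum, Fintype.sum_prod_type, LinearMap.sum_apply]
    exact Finset.sum_congr rfl fun x _ => h₁ x ρ
  · rw [LinearMap.sum_apply, ptraceLeft_sum, Fintype.sum_prod_type_right, LinearMap.sum_apply]
    exact Finset.sum_congr rfl fun y _ => h₂ y ρ

lemma kraus_eq_zero_of_ptraceRight_eq_self {H K : Type*} [Fintype H] [DecidableEq H]
    [Fintype K] {m : ℕ} (Ks : Fin m → Matrix (H × K) H ℂ)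
    (hid : ∀ ρ : Matrix H H ℂ, ptraceRight (∑ i, Ks i * ρ * (Ks i)ᴴ) = ρ) ⦃a c : H⦄
    (hac : a ≠ c) (k : K) (i : Fin m) : Ks i (a, k) c = 0 := by
  have h := congr_fun (congr_fun (hid (single c c (1 : ℂ))) a) a
  simp only [ptraceRight, kraus_single_apply, single_apply_of_row_ne hac.symm,
    Complex.mul_conj, ← Complex.ofReal_sum, Complex.ofReal_eq_zero] at h
  rw [← Fintype.sum_prod_type',
    Fintype.sum_eq_zero_iff_of_nonneg fun _ => Complex.normSq_nonneg _] at h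
  exact Complex.normSq_eq_zero.mp (congr_fun h (k, i))

theorem not_channelsCompatible_id_id {H : Type*} [Fintype H] [DecidableEq H]
    (hH : 1 < Fintype.card H) :
    ¬ ChannelsCompatible (LinearMap.id : Matrix H H ℂ →ₗ[ℂ] Matrix H H ℂ) LinearMap.id := by
  rintro ⟨Λ, ⟨⟨m, Ks, hK⟩, -⟩, hR, hL⟩
  obtain ⟨a, b, hab⟩ := Fintype.exists_pair_of_one_lt_card hH
  have hKs_zero := kraus_eq_zero_of_ptraceRight_eq_self Ks fun ρ => by rw [← hK]; exact hR ρ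
  have h := congr_fun (congr_fun (hL (single a b (1 : ℂ))) a) b
  simp only [hK, ptraceLeft, kraus_single_apply, single_apply_same, LinearMap.id_apply] at h
  refine one_ne_zero (h.symm.trans (Finset.sum_eq_zero fun k _ =>
    Finset.sum_eq_zero fun i _ => ?_))
  by_cases hk : k = a
  · rw [hk, hKs_zero hab b i, map_zero, mul_zero]
  · rw [hKs_zero hk a i, zero_mul]

lemma sum_ofReal_smul_eq_self {ι M : Type*} [Fintype ι] [AddCommMonoid M] [Module ℂ M]
    {p : ι → ℝ} (hp : ∑ i, p i = 1) (f : M) : ∑ i, (p i : ℂ) • f = f := by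
  rw [← Finset.sum_smul, ← Complex.ofReal_sum, hp, Complex.ofReal_one, one_smul]

theorem stmt_11_general {H : Type*} [Fintype H] [DecidableEq H] (hdim : 2 ≤ Fintype.card H)
    (r : Fin 2 → Fin 2 → ℝ) (hsum : ∑ i, ∑ j, r i j = 1)
    (p q : Fin 2 → ℝ) (hp : ∀ i, p i = ∑ j, r i j) (hq : ∀ j, q j = ∑ i, r i j) :
    ¬ ParallelCompatible
        (fun i => (p i : ℂ) • (LinearMap.id : Matrix H H ℂ →ₗ[ℂ] Matrix H H ℂ))
        (fun j => (q j : ℂ) • (LinearMap.id : Matrix H H ℂ →ₗ[ℂ] Matrix H H ℂ)) := by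
  have hp₁ : ∑ i, p i = 1 := by simpa only [hp] using hsum
  have hq₁ : ∑ j, q j = 1 := by simpa only [hq] using Finset.sum_comm.trans hsum
  intro hcomp
  have hid := hcomp.channelsCompatible_sum
  rw [sum_ofReal_smul_eq_self hp₁, sum_ofReal_smul_eq_self hq₁] at hid
  exact not_channelsCompatible_id_id hdim hid

/-- For `dim H ≥ 2`, the instruments `{p_i · id}` and `{q_j · id}`
(marginals of a probability distribution `r`) are not parallelly compatible. -/
theorem stmt_11 {H : Type*} [Fintype H] [DecidableEq H] (hdim : 2 ≤ Fintype.card H)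
    (r : Fin 2 → Fin 2 → ℝ) (hr : ∀ i j, 0 ≤ r i j) (hsum : ∑ i, ∑ j, r i j = 1)
    (p q : Fin 2 → ℝ) (hp : ∀ i, p i = ∑ j, r i j) (hq : ∀ j, q j = ∑ i, r i j) :
    ¬ ParallelCompatible
        (fun i => (p i : ℂ) • (LinearMap.id : Matrix H H ℂ →ₗ[ℂ] Matrix H H ℂ))
        (fun j => (q j : ℂ) • (LinearMap.id : Matrix H H ℂ →ₗ[ℂ] Matrix H H ℂ)) :=
  stmt_11_general hdim r hsum p q hp hq

end
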